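/- Let K be a field and A = (α_{mn}) an M×N matrix with entries in T. Suppose there is a constant C₂ ≥ 0 such that for all nonnegative integers U₁,…,U_N, V₁,…,V_M, dim V(U₁,…,U_N; V₁,…,V_M) ≤ max(0, U₁+⋯+U_N − V₁−⋯−V_M) + C₂. Then for every nonzero ξ = (ξ₁,…,ξ_N) ∈ K[x]^N and every m ∈ {1,…,M}, one has ‖Σ_{n=1}^N α_{mn} ξ_n‖ ≠ 0; equivalently, Σ_{n=1}^N α_{mn} ξ_n is not a polynomial. -/

import Mathlib

open scoped BigOperators Classical

noncomputable section

variable {K : Type*} [Field K]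

/-- `x` as an element of `L = K((x⁻¹))`, realized as the Laurent series in `t = x⁻¹`
supported at the single exponent `-1`. -/
def xL (K : Type*) [Field K] : LaurentSeries K := HahnSeries.single (-1 : ℤ) 1

/-- The embedding of the polynomial ring `K[x]` into `L = K((x⁻¹))`. -/
def toL (P : Polynomial K) : LaurentSeries K := Polynomial.aeval (xL K) P

/-- The absolute value on `L`: `|0| = 0` and `|F| = e^M` where `M` is the degree in `x`
of the leading term of `F` (i.e. `M = -(order of F as a series in t = x⁻¹)`). -/
def absL (F : LaurentSeries K) : ℝ := if F = 0 then 0 else Real.exp (-(F.order : ℝ))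

/-- `‖F‖`, the distance from `F` to the nearest polynomial in `x`. -/
def normL (F : LaurentSeries K) : ℝ :=
  sInf { r : ℝ | ∃ P : Polynomial K, r = absL (F - toL P) }

/-- The solution space `V(U₁,…,U_N; V₁,…,V_M)` of the system
`|ξ_n| < e^{U_n}` and `‖∑_n α_{mn} ξ_n‖ < e^{-V_m}`. -/
def VSet {M N : ℕ} (A : Matrix (Fin M) (Fin N) (LaurentSeries K))
    (U : Fin N → ℕ) (V : Fin M → ℕ) : Set (Fin N → Polynomial K) :=
  { ξ | (∀ n, absL (toL (ξ n)) < Real.exp (U n)) ∧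
        (∀ m, normL (∑ n, A m n * toL (ξ n)) < Real.exp (-(V m : ℝ))) }

/-- `dim V(U₁,…,U_N; V₁,…,V_M)` as a `K`-vector space. -/
def dimV {M N : ℕ} (A : Matrix (Fin M) (Fin N) (LaurentSeries K))
    (U : Fin N → ℕ) (V : Fin M → ℕ) : ℕ :=
  Module.finrank K (Submodule.span K (VSet A U V))

/-- An `M × N` matrix with entries in `T = L/K[x]` is strongly badly approximable if
there is `C₁ > 0` with `e^{-C₁} < (∏_m ‖∑_n α_{mn} ξ_n‖) (∏_n max(|ξ_n|,1))`
for all nonzero `ξ ∈ K[x]^N`. -/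
def StronglyBadlyApproximable {M N : ℕ}
    (A : Matrix (Fin M) (Fin N) (LaurentSeries K)) : Prop :=
  ∃ C₁ : ℝ, 0 < C₁ ∧ ∀ ξ : Fin N → Polynomial K, ξ ≠ 0 →
    Real.exp (-C₁) <
      (∏ m, normL (∑ n, A m n * toL (ξ n))) * (∏ n, max (absL (toL (ξ n))) 1)

/-- The `V × U` Hankel matrix `M_{U;V}(α)` with `(i,j)` entry `a_{i+j-1}` (1-indexed),
where `a_i` is the coefficient of `x^{-i}` in `α`. -/
def hankel (α : LaurentSeries K) (U V : ℕ) : Matrix (Fin V) (Fin U) K :=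
  Matrix.of fun i j => α.coeff ((i : ℤ) + (j : ℤ) + 1)

/-- The block matrix `M_{U₁,…,U_N; V₁,…,V_M}(A)` whose `(m,n)` block is
`M_{U_n; V_m}(α_{mn})`. -/
def blockM {M N : ℕ} (A : Matrix (Fin M) (Fin N) (LaurentSeries K))
    (U : Fin N → ℕ) (V : Fin M → ℕ) :
    Matrix ((m : Fin M) × Fin (V m)) ((n : Fin N) × Fin (U n)) K :=
  Matrix.of fun i j => hankel (A i.1 j.1) (U j.1) (V i.1) i.2 j.2

/-!
If `‖∑ₙ α_{m₀n} ξₙ‖ = 0`, then `‖∑ₙ α_{m₀n} Q ξₙ‖ ≤ |Q| ‖∑ₙ α_{m₀n} ξₙ‖ = 0` for every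
`Q ∈ K[x]`. Hence all `Q ξ` with `deg Q < t` lie in `V(U,…,U; 0,…,W,…,0)` (with `W` in
place `m₀`) as soon as `U ≥ t + deg ξₙ`, however large `W` is. Choosing `W = N U` balances the
two sides, so the hypothesis bounds this `t`-dimensional space by `C₂`, which fails for `t > C₂`.
-/

open Polynomial

lemma toL_monomial (n : ℕ) (a : K) : toL (monomial n a) = HahnSeries.single (-(n : ℤ)) a := by
  rw [toL, aeval_monomial, xL, HahnSeries.single_pow, HahnSeries.algebraMap_apply',
    ← PowerSeries.C_eq_algebraMap, HahnSeries.ofPowerSeries_C, HahnSeries.C_apply,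
    HahnSeries.single_mul_single]
  simp

lemma toL_coeff (P : K[X]) (k : ℤ) :
    (toL P).coeff k = if 0 < k then 0 else P.coeff (-k).toNat := by
  induction P using Polynomial.induction_on' with
  | add p q hp hq =>
    simp only [toL, map_add, HahnSeries.coeff_add, Polynomial.coeff_add] at *
    rw [hp, hq]
    split_ifs <;> simp
  | monomial n a =>
    rw [toL_monomial, HahnSeries.coeff_single, coeff_monomial]
    split_ifs <;> first | rfl | omega

lemma toL_coeff_neg_natDegree (P : K[X]) : (toL P).coeff (-P.natDegree) = P.leadingCoeff := by
  rw [toL_coeff, if_neg (by omega), neg_neg, Int.toNat_natCast, leadingCoeff]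

lemma toL_ne_zero {P : K[X]} (hP : P ≠ 0) : toL P ≠ 0 :=
  HahnSeries.ne_zero_of_coeff_ne_zero <| by
    rwa [toL_coeff_neg_natDegree, leadingCoeff_ne_zero]

lemma order_toL {P : K[X]} (hP : P ≠ 0) : (toL P).order = -P.natDegree := by
  refine le_antisymm (HahnSeries.order_le_of_coeff_ne_zero ?_) ?_
  · rwa [toL_coeff_neg_natDegree, leadingCoeff_ne_zero]
  · by_contra! hlt
    have := HahnSeries.coeff_order_eq_zero.not.2 (toL_ne_zero hP)
    rw [toL_coeff, if_neg (by omega)] at this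
    exact this (coeff_eq_zero_of_natDegree_lt (by omega))

lemma absL_pos {F : LaurentSeries K} (hF : F ≠ 0) : 0 < absL F := by
  rw [absL, if_neg hF]
  exact Real.exp_pos _

lemma absL_nonneg (F : LaurentSeries K) : 0 ≤ absL F := by
  by_cases hF : F = 0
  · simp [absL, hF]
  · exact (absL_pos hF).le

lemma absL_mul (F G : LaurentSeries K) : absL (F * G) = absL F * absL G := by
  by_cases hF : F = 0
  · simp [absL, hF]
  by_cases hG : G = 0
  · simp [absL, hG]
  rw [absL, absL, absL, if_neg hF, if_neg hG, if_neg (mul_ne_zero hF hG),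
    HahnSeries.order_mul hF hG, ← Real.exp_add]
  push_cast
  ring_nf

lemma absL_toL_lt_exp_iff (P : K[X]) (u : ℕ) : absL (toL P) < Real.exp u ↔ P.degree < u := by
  by_cases hP : P = 0
  · simp [hP, toL, absL, Real.exp_pos]
  · rw [absL, if_neg (toL_ne_zero hP), order_toL hP, ← natDegree_lt_iff_degree_lt hP]
    push_cast
    rw [neg_neg, Real.exp_lt_exp, Nat.cast_lt]

lemma normL_le (F : LaurentSeries K) (P : K[X]) : normL F ≤ absL (F - toL P) :=
  csInf_le ⟨0, by rintro r ⟨Q, rfl⟩; exact absL_nonneg _⟩ ⟨P, rfl⟩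

lemma le_normL {F : LaurentSeries K} {r : ℝ} (h : ∀ P : K[X], r ≤ absL (F - toL P)) :
    r ≤ normL F :=
  le_csInf ⟨_, 0, rfl⟩ (by rintro _ ⟨P, rfl⟩; exact h P)

lemma exists_coeff_sub_toL_eq_zero (F : LaurentSeries K) :
    ∃ P : K[X], ∀ k : ℤ, k ≤ 0 → (F - toL P).coeff k = 0 := by
  refine ⟨∑ i ∈ Finset.range ((-F.order).toNat + 1), monomial i (F.coeff (-i)), fun k hk => ?_⟩
  rw [HahnSeries.coeff_sub, toL_coeff, if_neg (by omega), finsetSum_coeff]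
  simp only [coeff_monomial, Finset.sum_ite_eq', Finset.mem_range]
  split_ifs with hk'
  · rw [Int.toNat_of_nonneg (by omega), neg_neg, sub_self]
  · rw [HahnSeries.coeff_eq_zero_of_lt_order (by omega), sub_zero]

lemma normL_lt_one (F : LaurentSeries K) : normL F < 1 := by
  obtain ⟨P, hP⟩ := exists_coeff_sub_toL_eq_zero F
  refine (normL_le F P).trans_lt ?_
  by_cases h : F - toL P = 0
  · simp [absL, h]
  · have : 0 < (F - toL P).order := by
      by_contra! hle
      exact HahnSeries.coeff_order_eq_zero.not.2 h (hP _ hle)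
    rw [absL, if_neg h, Real.exp_lt_one_iff, neg_lt_zero]
    exact_mod_cast this

lemma normL_toL_mul_le (Q : K[X]) (F : LaurentSeries K) :
    normL (toL Q * F) ≤ absL (toL Q) * normL F := by
  by_cases hQ : Q = 0
  · simpa [hQ, toL, absL] using normL_le (0 : LaurentSeries K) 0
  have hpos := absL_pos (toL_ne_zero hQ)
  rw [← div_le_iff₀' hpos]
  refine le_normL fun P => ?_
  rw [div_le_iff₀' hpos, ← absL_mul, mul_sub]
  simpa only [toL, map_mul] using normL_le (toL Q * F) (Q * P)

section VSet

variable {M N : ℕ} (A : Matrix (Fin M) (Fin N) (LaurentSeries K))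

instance (n : ℕ) : FiniteDimensional K (degreeLT K n) :=
  .equiv (degreeLTEquiv K n).symm

lemma span_VSet_le_pi_degreeLT (U : Fin N → ℕ) (V : Fin M → ℕ) :
    Submodule.span K (VSet A U V) ≤ Submodule.pi Set.univ fun n => degreeLT K (U n) :=
  Submodule.span_le.2 fun _ hξ n _ => mem_degreeLT.2 <| (absL_toL_lt_exp_iff _ _).1 (hξ.1 n)

instance (U : Fin N → ℕ) (V : Fin M → ℕ) :
    FiniteDimensional K (Submodule.span K (VSet A U V)) :=
  have : FiniteDimensional K (Submodule.pi Set.univ fun n => degreeLT K (U n)) :=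
    .of_fg (Submodule.fg_pi fun _ => .of_finite)
  Submodule.finiteDimensional_of_le (span_VSet_le_pi_degreeLT A U V)

-- `Pi.single m₀ W` leaves only the conditions `‖·‖ < e⁰` on the rows `m ≠ m₀`, which always hold.
lemma smul_mem_VSet_of_normL_eq_zero {ξ : Fin N → K[X]} {m₀ : Fin M}
    (h0 : normL (∑ n, A m₀ n * toL (ξ n)) = 0) {t : ℕ} {U : Fin N → ℕ}
    (hU : ∀ n, t + (ξ n).natDegree ≤ U n) (W : ℕ) {Q : K[X]} (hQ : Q ∈ degreeLT K t) :
    Q • ξ ∈ VSet A U (Pi.single m₀ W) := by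
  refine ⟨fun n => ?_, fun m => ?_⟩
  · rw [absL_toL_lt_exp_iff, Pi.smul_apply, smul_eq_mul]
    by_cases hQ0 : Q = 0
    · simp [hQ0]
    have : Q.natDegree < t := (natDegree_lt_iff_degree_lt hQ0).2 (mem_degreeLT.1 hQ)
    refine (degree_le_natDegree.trans (WithBot.coe_le_coe.2 natDegree_mul_le)).trans_lt ?_
    exact WithBot.coe_lt_coe.2 (show Q.natDegree + (ξ n).natDegree < U n by have := hU n; omega)
  · have hrow : ∑ n, A m n * toL ((Q • ξ) n) = toL Q * ∑ n, A m n * toL (ξ n) := by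
      simp only [Pi.smul_apply, smul_eq_mul, toL, map_mul, Finset.mul_sum]
      exact Finset.sum_congr rfl fun n _ => by ring
    rw [hrow]
    by_cases hm : m = m₀
    · subst hm
      calc normL (toL Q * _) ≤ absL (toL Q) * 0 := h0 ▸ normL_toL_mul_le Q _
        _ < Real.exp _ := by rw [mul_zero]; exact Real.exp_pos _
    · simpa [hm] using normL_lt_one _

lemma le_dimV_of_normL_eq_zero {ξ : Fin N → K[X]} (hξ : ξ ≠ 0) {m₀ : Fin M}
    (h0 : normL (∑ n, A m₀ n * toL (ξ n)) = 0) {t : ℕ} {U : Fin N → ℕ}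
    (hU : ∀ n, t + (ξ n).natDegree ≤ U n) (W : ℕ) :
    t ≤ dimV A U (Pi.single m₀ W) := by
  let φ : K[X] →ₗ[K] Fin N → K[X] := (LinearMap.toSpanSingleton K[X] _ ξ).restrictScalars K
  have hφ : Function.Injective (φ ∘ₗ (degreeLT K t).subtype) :=
    (smul_left_injective K[X] hξ).comp Subtype.val_injective
  have hrange : LinearMap.range (φ ∘ₗ (degreeLT K t).subtype) ≤
      Submodule.span K (VSet A U (Pi.single m₀ W)) := by
    rintro _ ⟨Q, rfl⟩
    exact Submodule.subset_span (smul_mem_VSet_of_normL_eq_zero A h0 hU W Q.2)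
  calc t = Module.finrank K (degreeLT K t) := by
        rw [(degreeLTEquiv K t).finrank_eq, Module.finrank_fin_fun]
    _ = _ := (LinearMap.finrank_range_of_inj hφ).symm
    _ ≤ dimV A U (Pi.single m₀ W) := Submodule.finrank_mono hrange

end VSet

theorem norm_ne_zero_of_dimV_le_general {K : Type*} [Field K] {M N : ℕ}
    (A : Matrix (Fin M) (Fin N) (LaurentSeries K)) (C₂ : ℝ)
    (h : ∀ (U : Fin N → ℕ) (V : Fin M → ℕ),
      (dimV A U V : ℝ) ≤
        ((max 0 ((∑ n, (U n : ℤ)) - ∑ m, (V m : ℤ)) : ℤ) : ℝ) + C₂) :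
    ∀ ξ : Fin N → Polynomial K, ξ ≠ 0 →
      ∀ m : Fin M, normL (∑ n, A m n * toL (ξ n)) ≠ 0 := by
  intro ξ hξ m₀ h0
  set t := ⌈C₂⌉₊ + 1
  set u := t + Finset.univ.sup fun n => (ξ n).natDegree
  have hdim : t ≤ dimV A (fun _ => u) (Pi.single m₀ (N * u)) :=
    le_dimV_of_normL_eq_zero A hξ h0 (fun n =>
      Nat.add_le_add_left (Finset.le_sup (f := fun n => (ξ n).natDegree) (Finset.mem_univ n)) t) _
  have hbalanced :
      ∑ _ : Fin N, (u : ℤ) - ∑ m, ((Pi.single m₀ (N * u) : Fin M → ℕ) m : ℤ) = 0 := by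
    simp [← Nat.cast_sum]
  have hbound := h (fun _ => u) (Pi.single m₀ (N * u))
  rw [hbalanced, max_self, Int.cast_zero, zero_add] at hbound
  exact (Nat.lt_of_ceil_lt (Nat.lt_succ_self _)).not_ge ((Nat.cast_le.2 hdim).trans hbound)

/-- if there is `C₂ ≥ 0` with
`dim V(U₁,…,U_N; V₁,…,V_M) ≤ max(0, U₁+⋯+U_N − V₁−⋯−V_M) + C₂` for all nonnegative
integers `U`, `V`, then for every nonzero `ξ ∈ K[x]^N` and every `m`, one has
`‖∑_n α_{mn} ξ_n‖ ≠ 0`. -/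
theorem norm_ne_zero_of_dimV_le {K : Type*} [Field K] {M N : ℕ}
    (A : Matrix (Fin M) (Fin N) (LaurentSeries K)) (C₂ : ℝ) (hC₂ : 0 ≤ C₂)
    (h : ∀ (U : Fin N → ℕ) (V : Fin M → ℕ),
      (dimV A U V : ℝ) ≤
        ((max 0 ((∑ n, (U n : ℤ)) - ∑ m, (V m : ℤ)) : ℤ) : ℝ) + C₂) :
    ∀ ξ : Fin N → Polynomial K, ξ ≠ 0 →
      ∀ m : Fin M, normL (∑ n, A m n * toL (ξ n)) ≠ 0 :=
  norm_ne_zero_of_dimV_le_general A C₂ h
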